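/- arXiv:1910.14079 — 4 statements merged into one kernel-verified Lean document; each statement's English description precedes it below -/
import Mathlib

section
/- If a GARK method is A-stable with respect to the complex 2D test problem (i.e., its 2×2 stability matrix R₂(Z) has spectral radius at most 1, with boundary eigenvalues semisimple, for every Z in the admissible matrix set 𝕄), then the method is A-stable with respect to the scalar test problem: |R₁(z_f, z_s)| ≤ 1 for all z_f, z_s with nonpositive real part, where R₁(z_f, z_s) = [1 1] · R₂([[z_f, z_f],[z_s, z_s]]) · [1, 0]ᵀ. -/
open Matrix

namespace Stmt3

variable {sf ss : ℕ}

/-- The matrix `diag(b_fᵀ, b_sᵀ)` of a GARK method. -/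
noncomputable def Bmat (bf : Fin sf → ℂ) (bs : Fin ss → ℂ) :
    Matrix (Fin 2) (Fin sf ⊕ Fin ss) ℂ :=
  Matrix.of fun i => Sum.elim (fun j => if i = 0 then bf j else 0)
    (fun j => if i = 1 then bs j else 0)

/-- The right factor `[[z_f 𝟙, w_s 𝟙],[w_f 𝟙, z_s 𝟙]]`. -/
noncomputable def Wmat (Z : Matrix (Fin 2) (Fin 2) ℂ) :
    Matrix (Fin sf ⊕ Fin ss) (Fin 2) ℂ :=
  Matrix.of fun i j => Sum.elim (fun _ => Z 0 j) (fun _ => Z 1 j) i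

/-- The 2×2 stability matrix `R₂(Z)` of a GARK method. -/
noncomputable def R2 (Aff : Matrix (Fin sf) (Fin sf) ℂ) (Afs : Matrix (Fin sf) (Fin ss) ℂ)
    (Asf : Matrix (Fin ss) (Fin sf) ℂ) (Ass : Matrix (Fin ss) (Fin ss) ℂ)
    (bf : Fin sf → ℂ) (bs : Fin ss → ℂ) (Z : Matrix (Fin 2) (Fin 2) ℂ) :
    Matrix (Fin 2) (Fin 2) ℂ :=
  1 + Bmat bf bs *
    (1 - Matrix.fromBlocks (Z 0 0 • Aff) (Z 0 1 • Afs) (Z 1 0 • Asf) (Z 1 1 • Ass))⁻¹ *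
    Wmat Z

/-- The admissible set `𝕄`: 2×2 complex matrices with diagonal entries in the closed left
half-plane and a bounded matrix exponential `exp(tZ)` for `t ≥ 0`. -/
def admissible (Z : Matrix (Fin 2) (Fin 2) ℂ) : Prop :=
  (Z 0 0).re ≤ 0 ∧ (Z 1 1).re ≤ 0 ∧
    ∃ C : ℝ, ∀ t : ℝ, 0 ≤ t → ∀ i j, ‖NormedSpace.exp (t • Z) i j‖ ≤ C

/- ### auxiliary lemmas -/

lemma diag_fin_two' (a b : ℂ) : Matrix.diagonal ![a, b] = !![a, 0; 0, b] := by
  ext i j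
  fin_cases i <;> fin_cases j <;> simp [Matrix.diagonal]

lemma exp_formula (zf zs : ℂ) (h : zf + zs ≠ 0) (t : ℝ) :
    NormedSpace.exp (t • !![zf, zf; zs, zs]) =
      (zf + zs)⁻¹ • !![zf * Complex.exp (t * (zf + zs)) + zs,
        zf * Complex.exp (t * (zf + zs)) - zf;
        zs * Complex.exp (t * (zf + zs)) - zs,
        zs * Complex.exp (t * (zf + zs)) + zf] := by
  set P : Matrix (Fin 2) (Fin 2) ℂ := !![zf, 1; zs, -1] with hPdef
  have hdet : P.det = -(zf + zs) := by simp [hPdef, Matrix.det_fin_two_of]; ring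
  have hd : IsUnit P.det := by
    rw [hdet]; exact isUnit_iff_ne_zero.mpr (neg_ne_zero.mpr h)
  have hP : IsUnit P := (Matrix.isUnit_iff_isUnit_det P).2 hd
  set D : Matrix (Fin 2) (Fin 2) ℂ := Matrix.diagonal ![(t : ℂ) * (zf + zs), 0] with hDdef
  have h1 : (t • !![zf, zf; zs, zs] : Matrix (Fin 2) (Fin 2) ℂ) * P = P * D := by
    rw [hDdef, diag_fin_two']
    ext i j
    fin_cases i <;> fin_cases j <;>
      simp [hPdef, Matrix.mul_apply, Fin.sum_univ_two] <;> ring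
  have hkey : (t • !![zf, zf; zs, zs] : Matrix (Fin 2) (Fin 2) ℂ) = P * D * P⁻¹ := by
    calc (t • !![zf, zf; zs, zs] : Matrix (Fin 2) (Fin 2) ℂ)
        = (t • !![zf, zf; zs, zs]) * (P * P⁻¹) := by
          rw [Matrix.mul_nonsing_inv _ hd, mul_one]
      _ = ((t • !![zf, zf; zs, zs]) * P) * P⁻¹ := by rw [mul_assoc]
      _ = P * D * P⁻¹ := by rw [h1]
  rw [hkey, Matrix.exp_conj P D hP, hDdef, Matrix.exp_diagonal, Pi.exp_def]
  have e0 : (fun i => NormedSpace.exp (![(t : ℂ) * (zf + zs), 0] i)) =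
      ![Complex.exp ((t:ℂ) * (zf + zs)), 1] := by
    funext i
    fin_cases i <;>
      simp [← Complex.exp_eq_exp_ℂ, NormedSpace.exp_zero]
  rw [e0, diag_fin_two']
  have hinv : P⁻¹ = -(zf + zs)⁻¹ • !![-1, -1; -zs, zf] := by
    rw [Matrix.inv_def, hdet, Ring.inverse_eq_inv', inv_neg, hPdef,
      Matrix.adjugate_fin_two_of]
  rw [hinv]
  have hw1 : (zf + zs) * (zf + zs)⁻¹ = 1 := mul_inv_cancel₀ h
  generalize Complex.exp ((t:ℂ) * (zf + zs)) = E
  ext i j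
  fin_cases i <;> fin_cases j <;>
    simp [hPdef, Matrix.mul_apply, Fin.sum_univ_two] <;> ring

lemma abs_exp_le_one {z : ℂ} (hz : z.re ≤ 0) (t : ℝ) (ht : 0 ≤ t) :
    ‖Complex.exp ((t : ℂ) * z)‖ ≤ 1 := by
  rw [Complex.norm_exp]
  have : ((t : ℂ) * z).re = t * z.re := by
    simp [Complex.mul_re]
  rw [this]
  exact Real.exp_le_one_iff.mpr (mul_nonpos_of_nonneg_of_nonpos ht hz)

lemma admissible_of (zf zs : ℂ) (hf : zf.re ≤ 0) (hs : zs.re ≤ 0) (h : zf + zs ≠ 0) :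
    admissible !![zf, zf; zs, zs] := by
  refine ⟨by simp [hf], by simp [hs], ‖(zf + zs)⁻¹‖ *
    (2 * (‖zf‖ + ‖zs‖)), fun t ht i j => ?_⟩
  have hre : (zf + zs).re ≤ 0 := by
    rw [Complex.add_re]; linarith
  have hE : ‖Complex.exp ((t : ℂ) * (zf + zs))‖ ≤ 1 := abs_exp_le_one hre t ht
  rw [exp_formula zf zs h t]
  rw [Matrix.smul_apply, smul_eq_mul, norm_mul]
  apply mul_le_mul_of_nonneg_left ?_ (norm_nonneg _)
  have h0f := norm_nonneg zf
  have h0s := norm_nonneg zs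
  have tri : ∀ a b : ℂ, ‖a * Complex.exp ((t:ℂ) * (zf + zs)) + b‖ ≤
      ‖a‖ + ‖b‖ := by
    intro a b
    calc ‖a * Complex.exp ((t:ℂ) * (zf + zs)) + b‖
        ≤ ‖a * Complex.exp ((t:ℂ) * (zf + zs))‖ + ‖b‖ :=
          norm_add_le _ _
      _ = ‖a‖ * ‖Complex.exp ((t:ℂ) * (zf + zs))‖ + ‖b‖ := by
          rw [norm_mul]
      _ ≤ ‖a‖ * 1 + ‖b‖ := by
          gcongr
      _ = ‖a‖ + ‖b‖ := by ring
  have tri' : ∀ a b : ℂ, ‖a * Complex.exp ((t:ℂ) * (zf + zs)) - b‖ ≤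
      ‖a‖ + ‖b‖ := by
    intro a b
    rw [sub_eq_add_neg]
    simpa using tri a (-b)
  fin_cases i <;> fin_cases j <;> simp only [Matrix.cons_val', Matrix.cons_val_zero,
    Matrix.cons_val_one, Matrix.head_cons, Matrix.empty_val', Matrix.cons_val_fin_one,
    Matrix.head_fin_const, Matrix.of_apply]
  · exact (tri zf zs).trans (by linarith)
  · exact (tri' zf zf).trans (by linarith)
  · exact (tri' zs zs).trans (by linarith)
  · exact (tri zs zf).trans (by linarith)

lemma R2_app (Aff : Matrix (Fin sf) (Fin sf) ℂ) (Afs : Matrix (Fin sf) (Fin ss) ℂ)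
    (Asf : Matrix (Fin ss) (Fin sf) ℂ) (Ass : Matrix (Fin ss) (Fin ss) ℂ)
    (bf : Fin sf → ℂ) (bs : Fin ss → ℂ) (a b : ℂ) :
    R2 Aff Afs Asf Ass bf bs !![a, a; b, b] =
      1 + Bmat bf bs *
        (1 - Matrix.fromBlocks (a • Aff) (a • Afs) (b • Asf) (b • Ass))⁻¹ *
        Wmat !![a, a; b, b] := rfl

lemma col_eq (Aff : Matrix (Fin sf) (Fin sf) ℂ) (Afs : Matrix (Fin sf) (Fin ss) ℂ)
    (Asf : Matrix (Fin ss) (Fin sf) ℂ) (Ass : Matrix (Fin ss) (Fin ss) ℂ)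
    (bf : Fin sf → ℂ) (bs : Fin ss → ℂ) (a b : ℂ) :
    R2 Aff Afs Asf Ass bf bs !![a, a; b, b] 0 1 + R2 Aff Afs Asf Ass bf bs !![a, a; b, b] 1 1 =
      R2 Aff Afs Asf Ass bf bs !![a, a; b, b] 0 0 +
        R2 Aff Afs Asf Ass bf bs !![a, a; b, b] 1 0 := by
  have hW : ∀ k, (Wmat !![a, a; b, b] : Matrix (Fin sf ⊕ Fin ss) (Fin 2) ℂ) k 0 =
      Wmat !![a, a; b, b] k 1 := by
    rintro (k | k) <;> simp [Wmat]
  have hX : ∀ i : Fin 2,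
      (Bmat bf bs * (1 - Matrix.fromBlocks (a • Aff) (a • Afs) (b • Asf) (b • Ass))⁻¹ *
        Wmat !![a, a; b, b] : Matrix (Fin 2) (Fin 2) ℂ) i 0 =
      (Bmat bf bs * (1 - Matrix.fromBlocks (a • Aff) (a • Afs) (b • Asf) (b • Ass))⁻¹ *
        Wmat !![a, a; b, b] : Matrix (Fin 2) (Fin 2) ℂ) i 1 := by
    intro i
    erw [Matrix.mul_apply]
  rw [R2_app]
  simp only [Matrix.add_apply]
  rw [← hX 0, ← hX 1]
  have e01 : ((1 : Matrix (Fin 2) (Fin 2) ℂ)) 0 1 = 0 := by simp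
  have e11 : ((1 : Matrix (Fin 2) (Fin 2) ℂ)) 1 1 = 1 := by simp
  have e00 : ((1 : Matrix (Fin 2) (Fin 2) ℂ)) 0 0 = 1 := by simp
  have e10 : ((1 : Matrix (Fin 2) (Fin 2) ℂ)) 1 0 = 0 := by simp [Matrix.one_apply]
  rw [e01, e11, e00, e10]
  ring

lemma pow_sum (R : Matrix (Fin 2) (Fin 2) ℂ)
    (hcol : R 0 1 + R 1 1 = R 0 0 + R 1 0) (k : ℕ) :
    (R ^ k) 0 0 + (R ^ k) 1 0 = (R 0 0 + R 1 0) ^ k ∧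
      (R ^ k) 0 1 + (R ^ k) 1 1 = (R 0 0 + R 1 0) ^ k := by
  induction k with
  | zero => constructor <;> simp [Matrix.one_apply]
  | succ k ih =>
    constructor
    · rw [pow_succ, pow_succ]
      simp only [Matrix.mul_apply, Fin.sum_univ_two]
      linear_combination R 0 0 * ih.1 + R 1 0 * ih.2
    · rw [pow_succ, pow_succ]
      simp only [Matrix.mul_apply, Fin.sum_univ_two]
      linear_combination R 0 1 * ih.1 + R 1 1 * ih.2 + (R 0 0 + R 1 0) ^ k * hcol

lemma abs_le_one_of_pow_le (r : ℂ) (C : ℝ) (h : ∀ k : ℕ, ‖r‖ ^ k ≤ C) :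
    ‖r‖ ≤ 1 := by
  by_contra hlt
  push_neg at hlt
  obtain ⟨k, hk⟩ := pow_unbounded_of_one_lt C hlt
  exact absurd (h k) (not_le.2 hk)

lemma R1_le_one (Aff : Matrix (Fin sf) (Fin sf) ℂ) (Afs : Matrix (Fin sf) (Fin ss) ℂ)
    (Asf : Matrix (Fin ss) (Fin sf) ℂ) (Ass : Matrix (Fin ss) (Fin ss) ℂ)
    (bf : Fin sf → ℂ) (bs : Fin ss → ℂ)
    (hstab : ∀ Z : Matrix (Fin 2) (Fin 2) ℂ, admissible Z →
      ∃ C : ℝ, ∀ k : ℕ, ∀ i j, ‖(R2 Aff Afs Asf Ass bf bs Z ^ k) i j‖ ≤ C)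
    (zf zs : ℂ) (hf : zf.re ≤ 0) (hs : zs.re ≤ 0) (hsum : zf + zs ≠ 0) :
    ‖R2 Aff Afs Asf Ass bf bs !![zf, zf; zs, zs] 0 0 +
      R2 Aff Afs Asf Ass bf bs !![zf, zf; zs, zs] 1 0‖ ≤ 1 := by
  obtain ⟨C, hC⟩ := hstab _ (admissible_of zf zs hf hs hsum)
  set R := R2 Aff Afs Asf Ass bf bs !![zf, zf; zs, zs] with hR
  apply abs_le_one_of_pow_le _ (C + C)
  intro k
  have h1 := (pow_sum R (col_eq Aff Afs Asf Ass bf bs zf zs) k).1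
  calc ‖R 0 0 + R 1 0‖ ^ k
      = ‖(R 0 0 + R 1 0) ^ k‖ := (norm_pow _ _).symm
    _ = ‖(R ^ k) 0 0 + (R ^ k) 1 0‖ := by rw [h1]
    _ ≤ ‖(R ^ k) 0 0‖ + ‖(R ^ k) 1 0‖ := norm_add_le _ _
    _ ≤ C + C := add_le_add (hC k 0 0) (hC k 1 0)


lemma contAt_entry {X : Type*} [TopologicalSpace X] {m n : Type*}
    {A : X → Matrix m n ℂ} {x : X} (h : ContinuousAt A x) (i : m) (j : n) :
    ContinuousAt (fun y => A y i j) x := by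
  have h1 : Continuous (fun M : Matrix m n ℂ => M i j) :=
    (continuous_apply j).comp (continuous_apply i)
  exact h1.continuousAt.comp h

lemma contAt_matrix_mul {X : Type*} [TopologicalSpace X] {m n p : Type*} [Fintype n]
    {A : X → Matrix m n ℂ} {B : X → Matrix n p ℂ} {x : X}
    (hA : ContinuousAt A x) (hB : ContinuousAt B x) :
    ContinuousAt (fun y => A y * B y) x := by
  apply continuousAt_pi.mpr
  intro i
  apply continuousAt_pi.mpr
  intro j
  simp only [Matrix.mul_apply]
  exact tendsto_finset_sum _ fun k _ => (contAt_entry hA i k).mul (contAt_entry hB k j)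

set_option maxHeartbeats 1000000 in
/-- If a GARK method is A-stable with respect to the complex 2D test problem
(`R₂(Z)` is power bounded for every admissible `Z`), then it is A-stable with respect to
the scalar test problem. -/
theorem stmt_3 (Aff : Matrix (Fin sf) (Fin sf) ℂ) (Afs : Matrix (Fin sf) (Fin ss) ℂ)
    (Asf : Matrix (Fin ss) (Fin sf) ℂ) (Ass : Matrix (Fin ss) (Fin ss) ℂ)
    (bf : Fin sf → ℂ) (bs : Fin ss → ℂ)
    (hstab : ∀ Z : Matrix (Fin 2) (Fin 2) ℂ, admissible Z →
      ∃ C : ℝ, ∀ k : ℕ, ∀ i j, ‖(R2 Aff Afs Asf Ass bf bs Z ^ k) i j‖ ≤ C) :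
    ∀ zf zs : ℂ, zf.re ≤ 0 → zs.re ≤ 0 →
      ‖R2 Aff Afs Asf Ass bf bs !![zf, zf; zs, zs] 0 0 +
        R2 Aff Afs Asf Ass bf bs !![zf, zf; zs, zs] 1 0‖ ≤ 1 := by
  intro zf zs hf hs
  by_cases hU : IsUnit (1 - Matrix.fromBlocks (zf • Aff) (zf • Afs) (zs • Asf) (zs • Ass)).det
  case neg =>
    have h0 : (1 - Matrix.fromBlocks (zf • Aff) (zf • Afs) (zs • Asf) (zs • Ass))⁻¹ = 0 :=
      Matrix.nonsing_inv_apply_not_isUnit _ hU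
    rw [R2_app, h0]
    erw [Matrix.mul_zero, Matrix.zero_mul]
    norm_num [Matrix.one_apply]
  case pos =>
    set N : ℂ → Matrix (Fin sf ⊕ Fin ss) (Fin sf ⊕ Fin ss) ℂ := fun w =>
      1 - Matrix.fromBlocks ((zf + w) • Aff) ((zf + w) • Afs) ((zs + w) • Asf)
        ((zs + w) • Ass) with hNdef
    set g : ℂ → ℂ := fun w =>
      R2 Aff Afs Asf Ass bf bs !![zf + w, zf + w; zs + w, zs + w] 0 0 +
        R2 Aff Afs Asf Ass bf bs !![zf + w, zf + w; zs + w, zs + w] 1 0 with hgdef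
    have hN0 : N 0 = 1 - Matrix.fromBlocks (zf • Aff) (zf • Afs) (zs • Asf) (zs • Ass) := by
      simp [hNdef]
    have hNcont : Continuous N := by
      apply continuous_const.sub
      apply Continuous.matrix_fromBlocks <;>
        exact ((continuous_const.add continuous_id).smul continuous_const)
    have hRinv : ContinuousAt Ring.inverse ((N 0).det) := by
      rw [hN0]
      obtain ⟨u, hu⟩ := hU
      rw [← hu]
      exact NormedRing.inverse_continuousAt u
    have hinvc : ContinuousAt (fun w => (N w)⁻¹) 0 :=
      (continuousAt_matrix_inv (N 0) hRinv).comp hNcont.continuousAt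
    have hBX : ContinuousAt (fun w => Bmat bf bs * (N w)⁻¹) 0 :=
      contAt_matrix_mul continuousAt_const hinvc
    have hWcont : Continuous (fun w : ℂ =>
        (Wmat !![zf + w, zf + w; zs + w, zs + w] : Matrix (Fin sf ⊕ Fin ss) (Fin 2) ℂ)) := by
      apply continuous_matrix
      rintro (i | i) j <;> fin_cases j <;> simp [Wmat] <;>
        exact continuous_const.add continuous_id
    have hg : ContinuousAt (fun w =>
        Bmat bf bs * (N w)⁻¹ * Wmat !![zf + w, zf + w; zs + w, zs + w]) 0 :=
      contAt_matrix_mul hBX hWcont.continuousAt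
    have he : ∀ i j : Fin 2, ContinuousAt (fun w : ℂ =>
        (((1 : Matrix (Fin 2) (Fin 2) ℂ) +
          Bmat bf bs * (N w)⁻¹ * Wmat !![zf + w, zf + w; zs + w, zs + w] :
            Matrix (Fin 2) (Fin 2) ℂ)) i j) 0 := by
      intro i j
      have h1 : (fun w : ℂ => (((1 : Matrix (Fin 2) (Fin 2) ℂ) +
          Bmat bf bs * (N w)⁻¹ * Wmat !![zf + w, zf + w; zs + w, zs + w] :
            Matrix (Fin 2) (Fin 2) ℂ)) i j) =
          fun w : ℂ => (1 : Matrix (Fin 2) (Fin 2) ℂ) i j +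
            (Bmat bf bs * (N w)⁻¹ * Wmat !![zf + w, zf + w; zs + w, zs + w] :
              Matrix (Fin 2) (Fin 2) ℂ) i j := rfl
      rw [h1]
      exact continuousAt_const.add (contAt_entry hg i j)
    have hgcont : ContinuousAt g 0 := by
      have : g = fun w : ℂ =>
          (((1 : Matrix (Fin 2) (Fin 2) ℂ) +
            Bmat bf bs * (N w)⁻¹ * Wmat !![zf + w, zf + w; zs + w, zs + w] :
              Matrix (Fin 2) (Fin 2) ℂ)) 0 0 +
          (((1 : Matrix (Fin 2) (Fin 2) ℂ) +
            Bmat bf bs * (N w)⁻¹ * Wmat !![zf + w, zf + w; zs + w, zs + w] :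
              Matrix (Fin 2) (Fin 2) ℂ)) 1 0 := rfl
      rw [this]
      exact (he 0 0).add (he 1 0)
    have hneg : Filter.Tendsto (fun ε : ℝ => -(ε : ℂ)) (nhdsWithin 0 (Set.Ioi 0)) (nhds 0) := by
      have : Filter.Tendsto (fun ε : ℝ => -(ε : ℂ)) (nhds 0) (nhds (-(0:ℂ))) :=
        (Complex.continuous_ofReal.neg).tendsto 0
      rw [neg_zero] at this
      exact this.mono_left nhdsWithin_le_nhds
    have htend : Filter.Tendsto (fun ε : ℝ => g (-(ε : ℂ))) (nhdsWithin 0 (Set.Ioi 0))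
        (nhds (g 0)) := hgcont.tendsto.comp hneg
    have hb : ∀ ε ∈ Set.Ioi (0 : ℝ), ‖g (-(ε : ℂ))‖ ≤ 1 := by
      intro ε hε
      simp only [Set.mem_Ioi] at hε
      have hgε : g (-(ε : ℂ)) =
          R2 Aff Afs Asf Ass bf bs !![zf + -(ε:ℂ), zf + -(ε:ℂ); zs + -(ε:ℂ), zs + -(ε:ℂ)] 0 0 +
          R2 Aff Afs Asf Ass bf bs !![zf + -(ε:ℂ), zf + -(ε:ℂ); zs + -(ε:ℂ), zs + -(ε:ℂ)] 1 0 :=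
        rfl
      rw [hgε]
      apply R1_le_one Aff Afs Asf Ass bf bs hstab
      · simp [Complex.add_re, Complex.neg_re, Complex.ofReal_re]; linarith
      · simp [Complex.add_re, Complex.neg_re, Complex.ofReal_re]; linarith
      · intro hc
        have := congrArg Complex.re hc
        simp [Complex.add_re, Complex.neg_re, Complex.ofReal_re] at this
        linarith
    have habs : Filter.Tendsto (fun ε : ℝ => ‖g (-(ε : ℂ))‖)
        (nhdsWithin 0 (Set.Ioi 0)) (nhds ‖g 0‖) :=
      (continuous_norm.continuousAt.tendsto).comp htend
    have hfin : ‖g 0‖ ≤ 1 :=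
      le_of_tendsto habs (eventually_nhdsWithin_of_forall hb)
    have hg0 : g 0 = R2 Aff Afs Asf Ass bf bs !![zf, zf; zs, zs] 0 0 +
        R2 Aff Afs Asf Ass bf bs !![zf, zf; zs, zs] 1 0 := by
      simp only [hgdef, add_zero]
    rwa [hg0] at hfin


end Stmt3
end

section
/- Consider a 2×2 real matrix family R(w) = [[1 − w² p₁₁(w²), w + w³ p₁₂(w²)], [−w − w³ p₂₁(w²), 1 − w² p₂₂(w²)]] where p₁₁, p₁₂, p₂₁, p₂₂ are real polynomials. Then it is not the case that the spectral radius of R(w) is bounded by 1 for all real w; that is, there exists real w with spectral radius of R(w) greater than 1. -/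
open Polynomial Filter

private lemma det_expand (A B C D μ : ℂ) :
    Matrix.det (!![A, B; C, D] - μ • (1 : Matrix (Fin 2) (Fin 2) ℂ)) =
      (A - μ) * (D - μ) - B * C := by
  simp [Matrix.det_fin_two, Matrix.sub_apply, Matrix.smul_apply, Matrix.one_apply]

private lemma eig_bounds (a b c d : ℝ)
    (H : ∀ μ : ℂ, Matrix.det (!![(a:ℂ), (b:ℂ); (c:ℂ), (d:ℂ)] -
        μ • (1 : Matrix (Fin 2) (Fin 2) ℂ)) = 0 → ‖μ‖ ≤ 1) :
    |a * d - b * c| ≤ 1 ∧ |a + d| ≤ 2 := by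
  obtain ⟨s, hs⟩ := IsAlgClosed.exists_pow_nat_eq
    (((a:ℂ) + d) ^ 2 - 4 * ((a:ℂ) * d - b * c)) (n := 2) (by norm_num)
  have h1 : ‖((a:ℂ) + d + s) / 2‖ ≤ 1 := by
    apply H; rw [det_expand]; linear_combination hs / 4
  have h2 : ‖((a:ℂ) + d - s) / 2‖ ≤ 1 := by
    apply H; rw [det_expand]; linear_combination hs / 4
  constructor
  · have hdet : (a:ℂ) * d - b * c = (((a:ℂ) + d + s) / 2) * (((a:ℂ) + d - s) / 2) := by
      linear_combination hs / 4
    have : ‖(a:ℂ) * d - b * c‖ ≤ 1 := by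
      rw [hdet, norm_mul]
      exact mul_le_one₀ h1 (norm_nonneg _) h2
    rwa [← Complex.ofReal_mul, ← Complex.ofReal_mul, ← Complex.ofReal_sub,
      Complex.norm_real, Real.norm_eq_abs] at this
  · have : ‖(a:ℂ) + d‖ ≤ 2 := by
      have h3 : (a:ℂ) + d = (((a:ℂ) + d + s) / 2) + (((a:ℂ) + d - s) / 2) := by ring
      rw [h3]
      calc ‖_‖ ≤ _ + _ := norm_add_le _ _
      _ ≤ 1 + 1 := add_le_add h1 h2
      _ = 2 := by norm_num
    rwa [← Complex.ofReal_add, Complex.norm_real, Real.norm_eq_abs] at this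

/-- No family `R(w) = [[1 − w² p₁₁(w²), w + w³ p₁₂(w²)], [−w − w³ p₂₁(w²), 1 − w² p₂₂(w²)]]`
with polynomial entries can have spectral radius at most `1` for every real `w`. -/
theorem stmt_4 (p11 p12 p21 p22 : Polynomial ℝ) :
    ¬ ∀ w : ℝ, ∀ μ : ℂ,
      Matrix.det
        ((!![((1 - w ^ 2 * p11.eval (w ^ 2) : ℝ) : ℂ),
             ((w + w ^ 3 * p12.eval (w ^ 2) : ℝ) : ℂ);
             ((-w - w ^ 3 * p21.eval (w ^ 2) : ℝ) : ℂ),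
             ((1 - w ^ 2 * p22.eval (w ^ 2) : ℝ) : ℂ)]) -
          μ • (1 : Matrix (Fin 2) (Fin 2) ℂ)) = 0 →
        ‖μ‖ ≤ 1 := by
  intro H
  have key : ∀ w : ℝ,
      |(1 - w ^ 2 * p11.eval (w ^ 2)) * (1 - w ^ 2 * p22.eval (w ^ 2)) -
        (w + w ^ 3 * p12.eval (w ^ 2)) * (-w - w ^ 3 * p21.eval (w ^ 2))| ≤ 1 ∧
      |(1 - w ^ 2 * p11.eval (w ^ 2)) + (1 - w ^ 2 * p22.eval (w ^ 2))| ≤ 2 :=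
    fun w => eig_bounds _ _ _ _ (H w)
  -- trace bound forces p11 + p22 to vanish pointwise
  have htr0 : ∀ w : ℝ, w ^ 2 * (p11 + p22).eval (w ^ 2) = 0 := by
    set q : Polynomial ℝ := X ^ 2 * (p11 + p22).comp (X ^ 2) with hq
    have hqe : ∀ w : ℝ, q.eval w = w ^ 2 * (p11 + p22).eval (w ^ 2) := by
      intro w; simp [hq, eval_comp]
    have hb4 : ∀ x : ℝ, |q.eval x| ≤ 4 := by
      intro x
      have h2 := (key x).2
      rw [hqe, abs_le]
      rw [abs_le] at h2
      simp only [eval_add] at *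
      constructor <;> nlinarith [h2.1, h2.2]
    have hbdd : Filter.IsBoundedUnder (· ≤ ·) atTop fun x => |q.eval x| :=
      ⟨4, Filter.eventually_map.mpr (Filter.Eventually.of_forall hb4)⟩
    have hdeg : q.degree ≤ 0 := (Polynomial.abs_isBoundedUnder_iff q).mp hbdd
    have hc := Polynomial.eq_C_of_degree_le_zero hdeg
    have h00 : q.coeff 0 = 0 := by
      have h := hqe 0
      rw [hc] at h; simpa using h
    intro w
    rw [← hqe, hc, h00]
    simp
  -- determinant bound: contradiction via continuity at 0
  set f : ℝ → ℝ := fun w => 1 + w ^ 2 * (p12.eval (w ^ 2) + p21.eval (w ^ 2)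
      - (p11.eval (w ^ 2)) ^ 2) + w ^ 4 * (p12.eval (w ^ 2) * p21.eval (w ^ 2)) with hf
  have hcont : Continuous f := by
    apply Continuous.add
    apply Continuous.add continuous_const
    · exact (continuous_pow 2).mul (by fun_prop)
    · exact (continuous_pow 4).mul (by fun_prop)
  have hneg : ∀ w : ℝ, w ≠ 0 → f w ≤ 0 := by
    intro w hw
    have h1 := (key w).1
    have h22 : p22.eval (w ^ 2) = -p11.eval (w ^ 2) := by
      have h := htr0 w
      have hw2 : w ^ 2 ≠ 0 := pow_ne_zero _ hw
      simp only [eval_add] at h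
      have := (mul_eq_zero.mp h).resolve_left hw2
      linarith
    rw [h22, abs_le] at h1
    have hdd : (1 - w ^ 2 * p11.eval (w ^ 2)) * (1 - w ^ 2 * -p11.eval (w ^ 2)) -
        (w + w ^ 3 * p12.eval (w ^ 2)) * (-w - w ^ 3 * p21.eval (w ^ 2)) =
        1 + w ^ 2 * f w := by rw [hf]; ring
    rw [hdd] at h1
    have hw2 : (0:ℝ) < w ^ 2 := by positivity
    nlinarith [h1.2]
  have hf0 : f 0 = 1 := by simp [hf]
  have hle : f 0 ≤ 0 := by
    have htend : Tendsto f (nhdsWithin 0 {(0:ℝ)}ᶜ) (nhds (f 0)) :=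
      (hcont.tendsto 0).mono_left nhdsWithin_le_nhds
    refine le_of_tendsto htend ?_
    filter_upwards [self_mem_nhdsWithin] with x hx using hneg x hx
  rw [hf0] at hle
  linarith
end

section
/- For the GARK method with tableau A^{ff} = [1], A^{fs} = [0], A^{sf} = [1], A^{ss} = [1], b^f = b^s = [1], the 2×2 stability matrix evaluated at Z = [[−1, 1],[−10, −1]] has spectral radius (√5 + 3)/4 > 1. That is, R₂(Z) = I₂ + diag(1,1) · [[1 − (−1)·1, −1·0],[−(−10)·1, 1 − (−1)·1]]⁻¹ · [[−1, 1],[−10, −1]] has an eigenvalue of modulus (√5+3)/4. -/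
/-!
`R₂(Z)` works out to `!![1/2, 1/2; -5/2, -2]`, with trace `-3/2` and determinant `1/4`, so its
eigenvalues are the real roots `(-3 ± √5)/4` of `μ² + 3μ/2 + 1/4`; the larger in modulus is
`(3 + √5)/4`, which exceeds `1` because `√5 > 2`.
-/

open Matrix

theorem Matrix.det_sub_smul_one_fin_two {R : Type*} [CommRing R]
    (M : Matrix (Fin 2) (Fin 2) R) (μ : R) :
    (M - μ • (1 : Matrix (Fin 2) (Fin 2) R)).det = μ ^ 2 - M.trace * μ + M.det := by
  simp only [det_fin_two, trace_fin_two, sub_apply, smul_apply, smul_eq_mul, one_apply_eq,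
    one_apply_ne zero_ne_one, one_apply_ne one_ne_zero, mul_one, mul_zero, sub_zero]
  ring

lemma garkStabilityMatrix_eq :
    (1 + 1 * (!![(2 : ℂ), 0; 10, 2])⁻¹ * !![(-1 : ℂ), 1; -10, -1]) =
      !![(1 / 2 : ℂ), 1 / 2; -5 / 2, -2] := by
  have hinv : (!![(2 : ℂ), 0; 10, 2])⁻¹ = !![(1 / 2 : ℂ), 0; -5 / 2, 1 / 2] :=
    inv_eq_right_inv (by ext i j; fin_cases i <;> fin_cases j <;> norm_num)
  rw [hinv]
  ext i j; fin_cases i <;> fin_cases j <;> norm_num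

lemma det_garkStabilityMatrix_sub_smul_one (μ : ℂ) :
    (!![(1 / 2 : ℂ), 1 / 2; -5 / 2, -2] - μ • (1 : Matrix (Fin 2) (Fin 2) ℂ)).det =
      (μ - ((-(3 + √5) / 4 : ℝ) : ℂ)) * (μ - ((-(3 - √5) / 4 : ℝ) : ℂ)) := by
  have h5 : ((√5 : ℝ) : ℂ) ^ 2 = 5 := by
    rw [← Complex.ofReal_pow, Real.sq_sqrt (by norm_num)]; norm_num
  rw [det_sub_smul_one_fin_two, trace_fin_two_of, det_fin_two_of]
  push_cast
  linear_combination (1 / 16 : ℂ) * h5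

lemma two_lt_sqrt_five : 2 < √5 := by
  rw [Real.lt_sqrt (by norm_num)]; norm_num

lemma sqrt_five_lt_three : √5 < 3 := by
  rw [Real.sqrt_lt' (by norm_num)]; norm_num

/-- The 2D stability matrix of the given GARK method at `Z = [[−1, 1],[−10, −1]]` has
spectral radius `(√5 + 3)/4 > 1`. -/
theorem stmt_13 :
    let R : Matrix (Fin 2) (Fin 2) ℂ :=
      1 + 1 * (!![(2 : ℂ), 0; 10, 2])⁻¹ * !![(-1 : ℂ), 1; -10, -1]
    (∃ μ : ℂ, Matrix.det (R - μ • (1 : Matrix (Fin 2) (Fin 2) ℂ)) = 0 ∧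
        ‖μ‖ = (Real.sqrt 5 + 3) / 4) ∧
    (∀ μ : ℂ, Matrix.det (R - μ • (1 : Matrix (Fin 2) (Fin 2) ℂ)) = 0 →
        ‖μ‖ ≤ (Real.sqrt 5 + 3) / 4) ∧
    1 < (Real.sqrt 5 + 3) / 4 := by
  intro R
  have hroots (μ : ℂ) : (R - μ • 1).det = 0 ↔
      μ = ((-(3 + √5) / 4 : ℝ) : ℂ) ∨ μ = ((-(3 - √5) / 4 : ℝ) : ℂ) := by
    rw [show R = _ from garkStabilityMatrix_eq, det_garkStabilityMatrix_sub_smul_one, mul_eq_zero,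
      sub_eq_zero, sub_eq_zero]
  have hnorm₁ : ‖((-(3 + √5) / 4 : ℝ) : ℂ)‖ = (√5 + 3) / 4 := by
    rw [Complex.norm_real, Real.norm_eq_abs, abs_of_neg (by linarith [two_lt_sqrt_five])]
    ring
  have hnorm₂ : ‖((-(3 - √5) / 4 : ℝ) : ℂ)‖ = (3 - √5) / 4 := by
    rw [Complex.norm_real, Real.norm_eq_abs, abs_of_neg (by linarith [sqrt_five_lt_three])]
    ring
  refine ⟨⟨_, (hroots _).2 (Or.inl rfl), hnorm₁⟩, fun μ hμ => ?_, by linarith [two_lt_sqrt_five]⟩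
  rcases (hroots μ).1 hμ with rfl | rfl
  · exact hnorm₁.le
  · rw [hnorm₂]; linarith [two_lt_sqrt_five]
end

section
/- Condition 4e of the compound-fast GARK order conditions: for the compound-fast structure, 𝐛^{fT} 𝐀^{ff} 𝐀^{fs} 𝐜^s evaluates to (1/M²) Σ_{λ=1}^M [bᵀ A A^{fs,λ} c + (M − λ) bᵀ A^{fs,λ} c]. Concretely, with the block-lower-triangular fast coefficient matrix whose diagonal blocks are (1/M)A and strictly-lower blocks are (1/M)𝟙bᵀ, and fast weights 𝐛^f = (1/M)(b,…,b), slow coupling blocks 𝐀^{fs} = (A^{fs,1};…;A^{fs,M}), one has Σ_{λ=1}^M bᵀ[(1/M)A + Σ_{k=1}^{M−λ}(1/M)𝟙bᵀ] A^{fs,λ} c = (1/M)[Σ_λ bᵀ A A^{fs,λ} c + Σ_λ (M−λ) bᵀ A^{fs,λ} c], using bᵀ𝟙 = 1. -/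
open Matrix

lemma vecMulVec_mulVec' {s : ℕ} (u v w : Fin s → ℝ) :
    Matrix.vecMulVec u v *ᵥ w = (v ⬝ᵥ w) • u := by
  ext i
  simp [Matrix.mulVec, Matrix.vecMulVec_apply, dotProduct, Finset.mul_sum, mul_comm,
    mul_left_comm]

lemma dot_vecMulVec_mulVec {s : ℕ} (b w : Fin s → ℝ) (hb : b ⬝ᵥ (fun _ => (1 : ℝ)) = 1) :
    b ⬝ᵥ (Matrix.vecMulVec (fun _ => (1 : ℝ)) b *ᵥ w) = b ⬝ᵥ w := by
  rw [vecMulVec_mulVec', dotProduct_smul, hb, smul_eq_mul, mul_one]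

/-- Condition 4e of the compound-fast GARK order conditions: the block-matrix algebra
identity `𝐛^{fT} 𝐀^{ff} 𝐀^{fs} c =
(1/M²)[Σ_λ bᵀ A A^{fs,λ} c + Σ_λ (M−λ) bᵀ A^{fs,λ} c]`, written after factoring out
one `1/M` so that each λ-block contributes `bᵀ[(1/M)A + ((M−λ)/M)𝟙bᵀ] A^{fs,λ} c`. -/
theorem stmt_19 {s M : ℕ} (A : Matrix (Fin s) (Fin s) ℝ) (b c : Fin s → ℝ)
    (hb : b ⬝ᵥ (fun _ => (1 : ℝ)) = 1)
    (Afs : Fin M → Matrix (Fin s) (Fin s) ℝ) :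
    ∑ lam : Fin M,
        b ⬝ᵥ ((((1 / (M : ℝ)) • A +
          (((M - (lam.val + 1) : ℕ) : ℝ) / M) • Matrix.vecMulVec (fun _ => (1 : ℝ)) b) *
            Afs lam) *ᵥ c) =
      (1 / (M : ℝ)) * (∑ lam : Fin M, b ⬝ᵥ ((A * Afs lam) *ᵥ c) +
        ∑ lam : Fin M, ((M - (lam.val + 1) : ℕ) : ℝ) * (b ⬝ᵥ (Afs lam *ᵥ c))) := by
  have key : ∀ lam : Fin M,
      b ⬝ᵥ ((((1 / (M : ℝ)) • A +
        (((M - (lam.val + 1) : ℕ) : ℝ) / M) • Matrix.vecMulVec (fun _ => (1 : ℝ)) b) *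
          Afs lam) *ᵥ c) =
      (1 / (M : ℝ)) * (b ⬝ᵥ ((A * Afs lam) *ᵥ c)) +
      (1 / (M : ℝ)) * (((M - (lam.val + 1) : ℕ) : ℝ) * (b ⬝ᵥ (Afs lam *ᵥ c))) := by
    intro lam
    rw [Matrix.add_mul, Matrix.add_mulVec, dotProduct_add, Matrix.smul_mul, Matrix.smul_mul,
      Matrix.smul_mulVec, Matrix.smul_mulVec, dotProduct_smul, dotProduct_smul,
      ← Matrix.mulVec_mulVec (M := Matrix.vecMulVec (fun _ => (1:ℝ)) b),
      dot_vecMulVec_mulVec b _ hb, smul_eq_mul, smul_eq_mul]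
    ring
  rw [Finset.sum_congr rfl (fun lam _ => key lam), Finset.sum_add_distrib,
    ← Finset.mul_sum, ← Finset.mul_sum, mul_add]
end
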